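/- (Monotonicity of L with respect to the initial position.) For any 0 ≤ i ≤ j, the branching Markov chain L under P_i is stochastically dominated by L under P_j: the two processes can be constructed on the same probability space so that ℓ(x) ≤ ℓ̃(x) for every vertex x of T almost surely, where ℓ and ℓ̃ denote the position functions of the copies started from i and j respectively. -/

import Mathlib

open MeasureTheory ProbabilityTheory Filter Topology
open scoped ENNReal NNReal

namespace CookieRW

/-- A cookie environment `𝒞 = (p 1, …, p M ; q)`.  Only the values `p 1, …, p M`
of the strength function are relevant. -/
structure Env where
  M : ℕ
  hM : 1 ≤ M
  p : ℕ → ℝ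
  hp : ∀ i, 1 ≤ i → i ≤ M → 0 ≤ p i ∧ p i < 1
  q : ℝ
  hq0 : 0 < q
  hq1 : q < 1

namespace Env

/-- strength of the excitation received on the `j`-th visit to a site
(`q` after the `M` cookies have been eaten). -/
def str (C : Env) (j : ℕ) : ℝ := if j ≤ C.M then C.p j else C.q

/-- canonical componentwise partial order on cookie environments -/
def le (C C' : Env) : Prop :=
  C.M = C'.M ∧ (∀ i, 1 ≤ i → i ≤ C.M → C.p i ≤ C'.p i) ∧ C.q ≤ C'.q

end Env

/-- vertices of the rooted `b`-ary tree: the root is `[]` and the children of `x`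
are the lists `i :: x`, `i : Fin b`. -/
abbrev Vertex (b : ℕ) := List (Fin b)

def root (b : ℕ) : Vertex b := []

/-- the father of a vertex (the father of the root is the root itself). -/
def father {b : ℕ} (x : Vertex b) : Vertex b := x.tail

def child {b : ℕ} (x : Vertex b) (i : Fin b) : Vertex b := i :: x

/-- number of visits of the trajectory `h` to its position at time `n`,
up to and including time `n`. -/
def visits {b : ℕ} (h : ℕ → Vertex b) (n : ℕ) : ℕ :=
  ((Finset.range (n + 1)).filter fun k => h k = h n).card

/-- `X` is a `C` cookie (multi-excited) random walk on the rooted `b`-ary tree,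
under the probability measure `P`. -/
def IsCRW {Ω : Type*} [MeasurableSpace Ω] (b : ℕ) (C : Env)
    (P : Measure Ω) (X : ℕ → Ω → Vertex b) : Prop :=
  (∀ n x, MeasurableSet {ω | X n ω = x}) ∧
  P {ω | X 0 ω = root b} = 1 ∧
  ∀ (n : ℕ) (h : ℕ → Vertex b),
    P {ω | ∀ k ≤ n, X k ω = h k} ≠ 0 →
      (∀ i : Fin b,
        (P[|{ω | ∀ k ≤ n, X k ω = h k}]) {ω | X (n + 1) ω = child (h n) i}
          = ENNReal.ofReal (C.str (visits h n) / b)) ∧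
      (P[|{ω | ∀ k ≤ n, X k ω = h k}]) {ω | X (n + 1) ω = father (h n)}
          = ENNReal.ofReal (1 - C.str (visits h n))

/-- the walk visits every vertex infinitely often, almost surely. -/
def Recurrent {Ω : Type*} [MeasurableSpace Ω] {b : ℕ}
    (P : Measure Ω) (X : ℕ → Ω → Vertex b) : Prop :=
  ∀ x : Vertex b, P {ω | {n : ℕ | X n ω = x}.Infinite} = 1

/-- `|X_n| → ∞` almost surely. -/
def Transient {Ω : Type*} [MeasurableSpace Ω] {b : ℕ}
    (P : Measure Ω) (X : ℕ → Ω → Vertex b) : Prop :=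
  P {ω | Tendsto (fun n => (X n ω).length) atTop atTop} = 1

/-- successive return times of the walk to the root (`sInf ∅ = ⊤ = ∞`). -/
noncomputable def tau {Ω : Type*} {b : ℕ} (X : ℕ → Ω → Vertex b) : ℕ → Ω → ℕ∞
  | 0 => fun _ => 0
  | k + 1 => fun ω =>
      sInf {t : ℕ∞ | ∃ m : ℕ, t = (m : ℕ∞) ∧ tau X k ω < (m : ℕ∞) ∧ X m ω = root b}

/-- distribution of `ξ_i` : `xiProb b C i v = P(ξ_i = v)` for `v ∈ {0, …, b}`. -/
noncomputable def xiProb (b : ℕ) (C : Env) (i v : ℕ) : ℝ :=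
  if v = 0 then 1 - C.str i else if v ≤ b then C.str i / b else 0

/-- probability of a given realization `e` of `(ξ_1, …, ξ_N)`. -/
noncomputable def seqWeight (b : ℕ) (C : Env) {N : ℕ} (e : Fin N → Fin (b + 1)) : ℝ :=
  ∏ k, xiProb b C (k.1 + 1) (e k).1

/-- the cookie environment matrix `p(i,j)` : the probability that exactly `j` of the
`ξ`'s take the value `1` before the `i`-th failure in the sequence `(ξ_1, ξ_2, …)`,
obtained by decomposing over the time `N` of the `i`-th failure. -/
noncomputable def pMat (b : ℕ) (C : Env) (i j : ℕ) : ℝ :=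
  if i = 0 then (if j = 0 then 1 else 0)
  else
    ∑' N : ℕ,
      ∑ e ∈ Finset.univ.filter (fun e : Fin N → Fin (b + 1) =>
          (Finset.univ.filter fun k => (e k).1 = 0).card = i ∧
          (Finset.univ.filter fun k => (e k).1 = 1).card = j ∧
          ∀ k : Fin N, k.1 + 1 = N → (e k).1 = 0),
        seqWeight b C e

/-- entries `p^{(n)}(i,j)` of the `n`-th power of the matrix `P`. -/
noncomputable def pPow (b : ℕ) (C : Env) : ℕ → ℕ → ℕ → ℝ
  | 0 => fun i j => if i = j then 1 else 0
  | n + 1 => fun i j => ∑' k : ℕ, pPow b C n i k * pMat b C k j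

/-- accessibility `i → j` for the matrix `P`. -/
def acc (b : ℕ) (C : Env) (i j : ℕ) : Prop := ∃ n, 1 ≤ n ∧ 0 < pPow b C n i j

/-- mutual accessibility `i ↔ j`. -/
def macc (b : ℕ) (C : Env) (i j : ℕ) : Prop := acc b C i j ∧ acc b C j i

/-- the spectral radius `lim_n (p^{(n)}(i,i))^{1/n}` of the irreducible class of `i`
(a path from `i` to `i` stays inside the class of `i`). -/
noncomputable def classRadius (b : ℕ) (C : Env) (i : ℕ) : ℝ :=
  limsup (fun n : ℕ => (pPow b C n i i) ^ ((n : ℝ)⁻¹)) atTop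

/-- `λ(𝒞)` : the largest spectral radius of the irreducible classes of `P`
other than `{0}`. -/
noncomputable def lambdaC (b : ℕ) (C : Env) : ℝ :=
  sSup {x : ℝ | ∃ i, 1 ≤ i ∧ macc b C i i ∧ x = classRadius b C i}

/-- the quantity `λ_sym(𝒞)` of Theorem 1.5. -/
noncomputable def lambdaSym (b : ℕ) (C : Env) : ℝ :=
  (C.q / (b * (1 - C.q))) *
    ∏ i ∈ Finset.Icc 1 C.M,
      ((1 - C.p i) * (C.q / (b * (1 - C.q))) + (b - 1) * C.p i / b
        + (C.p i / b) * (C.q / (b * (1 - C.q)))⁻¹)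

/-- the left endpoint `l_K` of the unique infinite irreducible class of `P`
(the class of `M + 1`). -/
noncomputable def lK (b : ℕ) (C : Env) : ℕ := sInf {i | macc b C i (C.M + 1)}

/-- joint law of the positions of the `b` children of a particle located at `j0`:
`childLaw b C j0 j` is the probability that, among `ξ_1, …, ξ_{j0 + j 1 + … + j b}`,
exactly `j0` of them equal `0`, exactly `j k` of them equal `k` for `k ∈ {1, …, b}`,
and the last one equals `0`. -/
noncomputable def childLaw (b : ℕ) (C : Env) (j0 : ℕ) (j : Fin b → ℕ) : ℝ :=
  if j0 = 0 then (if ∀ i, j i = 0 then 1 else 0)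
  else
    ∑ e ∈ Finset.univ.filter (fun e : Fin (j0 + ∑ i, j i) → Fin (b + 1) =>
        (Finset.univ.filter fun k => (e k).1 = 0).card = j0 ∧
        (∀ i : Fin b, (Finset.univ.filter fun k => (e k).1 = i.1 + 1).card = j i) ∧
        ∀ k, k.1 + 1 = j0 + ∑ i, j i → (e k).1 = 0),
      seqWeight b C e

/-- `ℓ` is (a realization of) the branching Markov chain `L` associated with the
cookie environment `C`, started from one particle located at `k` (the measure `P_k`):
particles are indexed by the vertices of the tree, and, conditionally on the
positions of the particles up to generation `n`, the children vectors of the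
particles of generation `n` are independent with joint law `childLaw`. -/
def IsBMC {Ω : Type*} [MeasurableSpace Ω] (b : ℕ) (C : Env) (P : Measure Ω)
    (ℓ : Vertex b → Ω → ℕ) (k : ℕ) : Prop :=
  (∀ x m, MeasurableSet {ω | ℓ x ω = m}) ∧
  P {ω | ℓ (root b) ω = k} = 1 ∧
  ∀ (n : ℕ) (g f : Vertex b → ℕ),
    P {ω | ∀ y : Vertex b, y.length ≤ n → ℓ y ω = g y} ≠ 0 →
      (P[|{ω | ∀ y : Vertex b, y.length ≤ n → ℓ y ω = g y}])
          {ω | ∀ x : Vertex b, x.length = n + 1 → ℓ x ω = f x}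
        = ENNReal.ofReal
            (∏ v : Fin n → Fin b,
              childLaw b C (g (List.ofFn v)) fun i => f (i :: List.ofFn v))

/-- the branching Markov chain dies out : at some generation all particles are at `0`. -/
def DiesOut {Ω : Type*} {b : ℕ} (ℓ : Vertex b → Ω → ℕ) (ω : Ω) : Prop :=
  ∃ n : ℕ, ∀ x : Vertex b, x.length = n → ℓ x ω = 0

/-- `Z` is a Markov chain on `ℕ` with transition matrix the cookie environment
matrix `P`, started from `i0`. -/
def IsChainP {Ω : Type*} [MeasurableSpace Ω] (b : ℕ) (C : Env) (P : Measure Ω)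
    (Z : ℕ → Ω → ℕ) (i0 : ℕ) : Prop :=
  (∀ n m, MeasurableSet {ω | Z n ω = m}) ∧
  P {ω | Z 0 ω = i0} = 1 ∧
  ∀ (n : ℕ) (h : ℕ → ℕ),
    P {ω | ∀ k ≤ n, Z k ω = h k} ≠ 0 →
      ∀ j, (P[|{ω | ∀ k ≤ n, Z k ω = h k}]) {ω | Z (n + 1) ω = j}
        = ENNReal.ofReal (pMat b C (h n) j)

/-- the largest positive eigenvalue `ν(p₁,p₂)` of the matrix of Proposition 1.7. -/
noncomputable def nu (b : ℕ) (p1 p2 : ℝ) : ℝ :=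
  (1 / (2 * (b : ℝ) ^ 2)) *
    (((b : ℝ) - 1) * p1 * p2 + b * p1 +
      Real.sqrt (((b : ℝ) ^ 2 - 6 * b + 1) * p1 ^ 2 * p2 ^ 2
        + 2 * b * ((b : ℝ) - 1) * p1 ^ 2 * p2 + (b : ℝ) ^ 2 * p1 ^ 2
        + 4 * b * p1 * p2 ^ 2))

/-- `s = q / (q + (1-q) b)`. -/
noncomputable def sC (b : ℕ) (C : Env) : ℝ := C.q / (C.q + (1 - C.q) * b)

/-- probability of the event `E_{m,n}` : among `(ξ_1, …, ξ_M)` there are at least `m`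
terms equal to `0` and exactly `n` terms equal to `1` before the `m`-th `0`. -/
noncomputable def probE (b : ℕ) (C : Env) (m n : ℕ) : ℝ :=
  ∑ e ∈ Finset.univ.filter (fun e : Fin C.M → Fin (b + 1) =>
      ∃ t : Fin C.M, (e t).1 = 0 ∧
        (Finset.univ.filter fun k => k ≤ t ∧ (e k).1 = 0).card = m ∧
        (Finset.univ.filter fun k => k < t ∧ (e k).1 = 1).card = n),
    seqWeight b C e

/-- probability of the event `E'_{m,n}` : among `(ξ_1, …, ξ_M)` there are exactly `m`
terms equal to `0` and exactly `n` terms equal to `1`. -/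
noncomputable def probE' (b : ℕ) (C : Env) (m n : ℕ) : ℝ :=
  ∑ e ∈ Finset.univ.filter (fun e : Fin C.M → Fin (b + 1) =>
      (Finset.univ.filter fun k => (e k).1 = 0).card = m ∧
      (Finset.univ.filter fun k => (e k).1 = 1).card = n),
    seqWeight b C e

/-- the correction term `A(j)` of Lemma 7.3. -/
noncomputable def Afun (b : ℕ) (C : Env) (j : ℕ) : ℝ :=
  (∑ i ∈ Finset.Icc 1 (C.M - j), probE b C i j * (sC b C / (1 - sC b C)) ^ (i - 1))
    - ∑ n ∈ Finset.Icc (j + 1) C.M, ∑ m ∈ Finset.range (C.M - n + 1),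
        probE' b C m n * (sC b C / (1 - sC b C)) ^ ((j : ℤ) + m - n)

/-- entries of the `n`-th power of the sub-matrix `(p(i,j))_{i,j ≥ l}`. -/
noncomputable def pPowFrom (b : ℕ) (C : Env) (l : ℕ) : ℕ → ℕ → ℕ → ℝ
  | 0 => fun i j => if i = j then 1 else 0
  | n + 1 => fun i j => ∑' k : ℕ, pPowFrom b C l n i (l + k) * pMat b C (l + k) j

/-- entries of the `n`-th power of a general matrix indexed by `ℕ`. -/
noncomputable def matPow (q : ℕ → ℕ → ℝ) : ℕ → ℕ → ℕ → ℝ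
  | 0 => fun i j => if i = j then 1 else 0
  | n + 1 => fun i j => ∑' k : ℕ, matPow q n i k * q k j

/-- irreducibility of a non-negative matrix indexed by `ℕ`. -/
def MatIrred (q : ℕ → ℕ → ℝ) : Prop := ∀ i j, ∃ n, 1 ≤ n ∧ 0 < matPow q n i j

/-- irreducibility of the finite sub-matrix `(q(i,j))_{i,j < N}`. -/
def FinIrred (q : ℕ → ℕ → ℝ) (N : ℕ) : Prop :=
  ∀ i j, i < N → j < N → ∃ m, 1 ≤ m ∧ ∃ c : ℕ → ℕ,
    c 0 = i ∧ c m = j ∧ (∀ t ≤ m, c t < N) ∧ ∀ t < m, 0 < q (c t) (c (t + 1))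

/-!
Both chains are driven by the same cookies. Every vertex `x` carries its own sequence
`ω x = (ξ_1, ξ_2, …)`, independent over the vertices, and a particle at `x` located at `j₀`
gives its child `x → k` the number of `ξ`'s equal to `k` that precede the `j₀`-th zero of
`ω x`; under the product measure this children vector has the law `childLaw`, so `bmc init`
is the chain started from `init`. Counting up to a later zero can only give more, hence by
induction along the tree `bmc i ≤ bmc j` at every vertex as soon as each `ω x` has infinitely
many zeros, which happens almost surely since `ξ_n = 0` with probability `1 - q > 0` for
`n > M`.
-/

open Finset

section Counting

variable {b : ℕ}

def countVal (v : ℕ) (s : ℕ → Fin (b + 1)) (N : ℕ) : ℕ :=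
  #{k ∈ range N | (s k).1 = v}

-- `sInf ∅ = 0`: if `s` has fewer than `j0` zeros, then `zeroTime j0 s = 0`.
noncomputable def zeroTime (j0 : ℕ) (s : ℕ → Fin (b + 1)) : ℕ :=
  sInf {N | j0 ≤ countVal 0 s N}

noncomputable def childCount (j0 : ℕ) (s : ℕ → Fin (b + 1)) (a : Fin b) : ℕ :=
  countVal (a.1 + 1) s (zeroTime j0 s)

lemma countVal_succ (v : ℕ) (s : ℕ → Fin (b + 1)) (N : ℕ) :
    countVal v s (N + 1) = countVal v s N + if (s N).1 = v then 1 else 0 := by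
  rw [countVal, countVal, range_add_one, filter_insert]
  split_ifs <;> simp [card_insert_of_notMem]

lemma countVal_mono (v : ℕ) (s : ℕ → Fin (b + 1)) : Monotone (countVal v s) :=
  fun _ _ h => card_le_card (filter_subset_filter _ (range_subset_range.2 h))

lemma countVal_eq_card_fin (v : ℕ) (s : ℕ → Fin (b + 1)) (N : ℕ) :
    countVal v s N = #{k : Fin N | (s k).1 = v} := by
  rw [countVal, card_filter, card_filter,
    Fin.sum_univ_eq_sum_range (fun k => if (s k).1 = v then 1 else 0)]

lemma sum_countVal (s : ℕ → Fin (b + 1)) (N : ℕ) :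
    ∑ v : Fin (b + 1), countVal v s N = N := by
  conv_rhs => rw [← card_range N, card_eq_sum_card_fiberwise (f := s) (t := univ)
    (fun _ _ => mem_univ _)]
  simp only [countVal, Fin.val_inj]

lemma zeroTime_zero (s : ℕ → Fin (b + 1)) : zeroTime 0 s = 0 :=
  Nat.sInf_eq_zero.2 (Or.inl (Nat.zero_le _))

lemma childCount_zero (s : ℕ → Fin (b + 1)) (a : Fin b) : childCount 0 s a = 0 := by
  simp [childCount, zeroTime_zero, countVal]

lemma zeroTime_eq_succ_iff {j0 N : ℕ} {s : ℕ → Fin (b + 1)} :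
    zeroTime j0 s = N + 1 ↔ countVal 0 s (N + 1) = j0 ∧ (s N).1 = 0 := by
  rw [zeroTime, Nat.sInf_upward_closed_eq_succ_iff
    (s := {N | j0 ≤ countVal 0 s N}) (fun _ _ h hk => le_trans hk (countVal_mono 0 s h))]
  simp only [Set.mem_ofPred_eq, not_le, countVal_succ]
  split_ifs <;> omega

lemma zeroTime_ne_zero {j0 : ℕ} {s : ℕ → Fin (b + 1)} (hj0 : j0 ≠ 0)
    (hs : ∃ N, j0 ≤ countVal 0 s N) : zeroTime j0 s ≠ 0 := by
  rw [zeroTime, Ne, Nat.sInf_eq_zero]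
  rintro (h | h)
  · exact hj0 (by simpa [countVal] using h)
  · exact Set.eq_empty_iff_forall_notMem.1 h _ hs.choose_spec

lemma exists_le_countVal_zero {s : ℕ → Fin (b + 1)} (hs : ∃ᶠ k in atTop, (s k).1 = 0)
    (j : ℕ) : ∃ N, j ≤ countVal 0 s N := by
  induction j with
  | zero => exact ⟨0, Nat.zero_le _⟩
  | succ j ih =>
    obtain ⟨N, hN⟩ := ih
    obtain ⟨k, hk, hk0⟩ := Filter.frequently_atTop.1 hs N
    refine ⟨k + 1, ?_⟩
    rw [countVal_succ, if_pos hk0]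
    have := countVal_mono 0 s hk
    omega

lemma childCount_mono {s : ℕ → Fin (b + 1)} (hs : ∃ᶠ k in atTop, (s k).1 = 0) {j0 j0' : ℕ}
    (h : j0 ≤ j0') (a : Fin b) : childCount j0 s a ≤ childCount j0' s a := by
  refine countVal_mono _ s (Nat.sInf_le ?_)
  exact le_trans h (Nat.sInf_mem (exists_le_countVal_zero hs j0'))

def childPatterns (j0 : ℕ) (w : Fin b → ℕ) : Finset (Fin (j0 + ∑ i, w i) → Fin (b + 1)) :=
  {e | #{k | (e k).1 = 0} = j0 ∧ (∀ i : Fin b, #{k | (e k).1 = i.1 + 1} = w i) ∧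
    ∀ k, k.1 + 1 = j0 + ∑ i, w i → (e k).1 = 0}

lemma childCount_eq_iff {j0 : ℕ} (hj0 : j0 ≠ 0) {s : ℕ → Fin (b + 1)}
    (hs : ∃ N, j0 ≤ countVal 0 s N) (w : Fin b → ℕ) :
    (∀ a, childCount j0 s a = w a) ↔
      (fun k : Fin (j0 + ∑ i, w i) => s k) ∈ childPatterns j0 w := by
  simp only [childPatterns, mem_filter, mem_univ, true_and, ← countVal_eq_card_fin]
  constructor
  · intro hw
    obtain ⟨N, hN⟩ := Nat.exists_eq_succ_of_ne_zero (zeroTime_ne_zero hj0 hs)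
    obtain ⟨h0, hlast⟩ := zeroTime_eq_succ_iff.1 hN
    have hcount (a : Fin b) : countVal (a.1 + 1) s (N + 1) = w a := by
      rw [← hw a, childCount, hN]
    have hlen : N + 1 = j0 + ∑ i, w i := by
      rw [← sum_countVal s (N + 1), Fin.sum_univ_succ]
      simp only [Fin.val_zero, Fin.val_succ, h0, hcount]
    rw [← hlen]
    exact ⟨h0, hcount, fun k hk => by rwa [show k.1 = N by omega]⟩
  · rintro ⟨h0, hcount, hlast⟩ a
    obtain ⟨N, hN⟩ : ∃ N, j0 + ∑ i, w i = N + 1 := Nat.exists_eq_succ_of_ne_zero (by omega)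
    have hz : zeroTime j0 s = j0 + ∑ i, w i := by
      rw [hN] at h0 ⊢
      exact zeroTime_eq_succ_iff.2 ⟨h0, hlast ⟨N, by omega⟩ hN.symm⟩
    rw [childCount, hz, hcount]

end Counting

section Measurability

variable {b : ℕ}

lemma measurable_countVal (v N : ℕ) :
    Measurable fun s : ℕ → Fin (b + 1) => countVal v s N := by
  simp only [countVal, card_filter]
  exact Finset.measurable_sum _ fun k _ =>
    (measurable_of_countable fun x : Fin (b + 1) => if x.1 = v then 1 else 0).comp
      (measurable_pi_apply k)

lemma measurable_zeroTime (j0 : ℕ) : Measurable (zeroTime (b := b) j0) := by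
  refine measurable_to_countable' fun T => ?_
  rcases T with _ | N
  · have : zeroTime (b := b) j0 ⁻¹' {0} =
        {_s | j0 = 0} ∪ ⋂ N, {s | countVal 0 s N < j0} := by
      ext s
      simp [zeroTime, Nat.sInf_eq_zero, countVal, Set.eq_empty_iff_forall_notMem]
    rw [this]
    exact .union (.const _)
      (.iInter fun N => measurableSet_lt (measurable_countVal 0 N) measurable_const)
  · have : zeroTime (b := b) j0 ⁻¹' {N + 1} =
        {s | countVal 0 s (N + 1) = j0} ∩ (fun s => s N) ⁻¹' {v | v.1 = 0} := by
      ext s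
      exact zeroTime_eq_succ_iff
    rw [this]
    exact (measurable_countVal 0 (N + 1) (measurableSet_singleton j0)).inter
      (measurable_pi_apply N (.of_discrete))

lemma measurable_childCount (j0 : ℕ) (a : Fin b) :
    Measurable fun s : ℕ → Fin (b + 1) => childCount j0 s a :=
  (measurable_from_prod_countable_left fun N => measurable_countVal (a.1 + 1) N
    : Measurable fun p : (ℕ → Fin (b + 1)) × ℕ => countVal (a.1 + 1) p.1 p.2).comp
    (measurable_id.prodMk (measurable_zeroTime j0))

end Measurability

section CookieMeasure

variable {b : ℕ} (C : Env)

lemma str_nonneg {i : ℕ} (hi : 1 ≤ i) : 0 ≤ C.str i := by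
  unfold Env.str
  split_ifs with h
  exacts [(C.hp i hi h).1, C.hq0.le]

lemma str_lt_one {i : ℕ} (hi : 1 ≤ i) : C.str i < 1 := by
  unfold Env.str
  split_ifs with h
  exacts [(C.hp i hi h).2, C.hq1]

lemma xiProb_nonneg {i : ℕ} (hi : 1 ≤ i) (v : ℕ) : 0 ≤ xiProb b C i v := by
  have := str_lt_one C hi
  have := str_nonneg C hi
  unfold xiProb
  split_ifs <;> first | linarith | positivity

lemma seqWeight_nonneg {N : ℕ} (e : Fin N → Fin (b + 1)) : 0 ≤ seqWeight b C e :=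
  prod_nonneg fun _ _ => xiProb_nonneg C (Nat.le_add_left 1 _) _

lemma childLaw_nonneg (j0 : ℕ) (w : Fin b → ℕ) : 0 ≤ childLaw b C j0 w := by
  unfold childLaw
  split_ifs
  exacts [zero_le_one, le_rfl, sum_nonneg fun e _ => seqWeight_nonneg C e]

lemma childLaw_of_ne_zero {j0 : ℕ} (hj0 : j0 ≠ 0) (w : Fin b → ℕ) :
    childLaw b C j0 w = ∑ e ∈ childPatterns j0 w, seqWeight b C e :=
  if_neg hj0

variable [NeZero b]

lemma sum_xiProb (i : ℕ) : ∑ v : Fin (b + 1), xiProb b C i v = 1 := by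
  have hb : (b : ℝ) ≠ 0 := Nat.cast_ne_zero.2 (NeZero.ne b)
  have hsucc (v : Fin b) : xiProb b C i v.succ = C.str i / b := by
    simp [xiProb, Nat.succ_le_of_lt v.2]
  have hzero : xiProb b C i (0 : Fin (b + 1)) = 1 - C.str i := if_pos rfl
  rw [Fin.sum_univ_succ, hzero, sum_congr rfl fun v _ => hsucc v, sum_const, card_univ,
    Fintype.card_fin, nsmul_eq_mul, mul_div_cancel₀ _ hb, sub_add_cancel]

variable (b) in
/-- The law of `ξ_{k+1}`: coordinate `k` of a cookie sequence plays the role of `ξ_{k+1}`. -/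
noncomputable def xiPMF (k : ℕ) : PMF (Fin (b + 1)) :=
  PMF.ofFintype (fun v => ENNReal.ofReal (xiProb b C (k + 1) v)) <| by
    rw [← ENNReal.ofReal_sum_of_nonneg fun (v : Fin (b + 1)) _ =>
        xiProb_nonneg C (Nat.le_add_left 1 k) v,
      sum_xiProb, ENNReal.ofReal_one]

variable (b) in
noncomputable def cookieSeqMeasure : Measure (ℕ → Fin (b + 1)) :=
  Measure.infinitePi fun k => (xiPMF b C k).toMeasure

variable (b) in
noncomputable def cookieMeasure : Measure (Vertex b → ℕ → Fin (b + 1)) :=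
  Measure.infinitePi fun _ => cookieSeqMeasure b C

instance : IsProbabilityMeasure (cookieSeqMeasure b C) := by
  unfold cookieSeqMeasure; infer_instance

instance : IsProbabilityMeasure (cookieMeasure b C) := by
  unfold cookieMeasure; infer_instance

lemma xiPMF_toMeasure_singleton (k : ℕ) (v : Fin (b + 1)) :
    (xiPMF b C k).toMeasure {v} = ENNReal.ofReal (xiProb b C (k + 1) v) := by
  rw [PMF.toMeasure_apply_singleton _ _ (.of_discrete), xiPMF, PMF.ofFintype_apply]

lemma cookieSeqMeasure_prefix_eq {L : ℕ} (e : Fin L → Fin (b + 1)) :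
    cookieSeqMeasure b C {s | ∀ k : Fin L, s k = e k} = ENNReal.ofReal (seqWeight b C e) := by
  have hpi : {s : ℕ → Fin (b + 1) | ∀ k : Fin L, s k = e k} =
      Set.pi ↑(range L) fun k => {v | ∀ hk : k < L, v = e ⟨k, hk⟩} := by
    ext s
    simp [Fin.forall_iff]
  rw [hpi, cookieSeqMeasure, Measure.infinitePi_pi _ fun _ _ => .of_discrete,
    seqWeight, ENNReal.ofReal_prod_of_nonneg fun k _ => xiProb_nonneg C (Nat.le_add_left 1 _) _,
    ← Fin.prod_univ_eq_prod_range]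
  refine prod_congr rfl fun k _ => ?_
  rw [← xiPMF_toMeasure_singleton]
  congr 1
  ext v
  simp [k.2]

end CookieMeasure

section CookieLaw

variable {b : ℕ} [NeZero b] (C : Env)

lemma xiPMF_toMeasure_ne_zero {k : ℕ} (hk : C.M ≤ k) :
    (xiPMF b C k).toMeasure {v | v.1 ≠ 0} = ENNReal.ofReal C.q := by
  have hstr : C.str (k + 1) = C.q := if_neg (by omega)
  have hcompl : {v : Fin (b + 1) | v.1 ≠ 0} = {0}ᶜ := by
    ext v
    exact Fin.val_ne_zero_iff
  rw [hcompl, prob_compl_eq_one_sub (.of_discrete), xiPMF_toMeasure_singleton]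
  simp only [xiProb, Fin.val_zero, if_true, hstr]
  rw [← ENNReal.ofReal_one, ← ENNReal.ofReal_sub _ (by linarith [C.hq1]), sub_sub_cancel]

lemma cookieSeqMeasure_forall_ne_zero (m : ℕ) :
    cookieSeqMeasure b C {s | ∀ k, m ≤ k → (s k).1 ≠ 0} = 0 := by
  have hbound (K : ℕ) :
      cookieSeqMeasure b C {s | ∀ k, m ≤ k → (s k).1 ≠ 0} ≤ ENNReal.ofReal C.q ^ K :=
    calc cookieSeqMeasure b C {s | ∀ k, m ≤ k → (s k).1 ≠ 0}
        ≤ cookieSeqMeasure b C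
            (Set.pi ↑(Ico (m + C.M) (m + C.M + K)) fun _ => {v | v.1 ≠ 0}) :=
          measure_mono fun s hs k hk => hs k ((Nat.le_add_right m C.M).trans (mem_Ico.1 hk).1)
      _ = ∏ k ∈ Ico (m + C.M) (m + C.M + K), (xiPMF b C k).toMeasure {v | v.1 ≠ 0} :=
          Measure.infinitePi_pi _ fun _ _ => .of_discrete
      _ = ENNReal.ofReal C.q ^ K := by
          rw [prod_congr rfl fun k hk => xiPMF_toMeasure_ne_zero C
            ((Nat.le_add_left C.M m).trans (mem_Ico.1 hk).1),
            prod_const, Nat.card_Ico, Nat.add_sub_cancel_left]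
  have hlim := ENNReal.tendsto_pow_atTop_nhds_zero_iff.2 (ENNReal.ofReal_lt_one.2 C.hq1)
  exact le_antisymm (ge_of_tendsto' hlim hbound) bot_le

lemma ae_frequently_zero : ∀ᵐ s ∂cookieSeqMeasure b C, ∃ᶠ k in atTop, (s k).1 = 0 := by
  simp only [Filter.frequently_atTop]
  refine ae_all_iff.2 fun m => ae_iff.2 ?_
  simpa using cookieSeqMeasure_forall_ne_zero C m

lemma cookieSeqMeasure_childCount_eq (j0 : ℕ) (w : Fin b → ℕ) :
    cookieSeqMeasure b C {s | ∀ a, childCount j0 s a = w a} =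
      ENNReal.ofReal (childLaw b C j0 w) := by
  rcases eq_or_ne j0 0 with rfl | hj0
  · by_cases hw : ∀ a, w a = 0
    · simp [childCount_zero, hw, childLaw]
    · have : {s : ℕ → Fin (b + 1) | ∀ a, childCount 0 s a = w a} = ∅ :=
        Set.eq_empty_of_forall_notMem fun s hs => hw fun a => by rw [← hs a, childCount_zero]
      simp [this, childLaw, hw]
  · let restrict (s : ℕ → Fin (b + 1)) (k : Fin (j0 + ∑ i, w i)) : Fin (b + 1) := s k
    have hae : {s | ∀ a, childCount j0 s a = w a} =ᵐ[cookieSeqMeasure b C]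
        restrict ⁻¹' ↑(childPatterns j0 w) := by
      filter_upwards [ae_frequently_zero C] with s hs
      exact propext (childCount_eq_iff hj0 (exists_le_countVal_zero hs j0) w)
    have hrestrict : Measurable restrict := measurable_pi_lambda _ fun k => measurable_pi_apply _
    rw [measure_congr hae, ← Measure.map_apply hrestrict (Finset.measurableSet _),
      ← sum_measure_singleton, childLaw_of_ne_zero C hj0,
      ENNReal.ofReal_sum_of_nonneg fun e _ => seqWeight_nonneg C e]
    refine sum_congr rfl fun e _ => ?_
    rw [Measure.map_apply hrestrict (measurableSet_singleton e), ← cookieSeqMeasure_prefix_eq]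
    congr 1
    ext s
    simp [restrict, funext_iff]

end CookieLaw

section Tree

variable {b : ℕ}

def generation (n : ℕ) : Finset (Vertex b) :=
  univ.image (List.ofFn : (Fin n → Fin b) → Vertex b)

def ball (n : ℕ) : Finset (Vertex b) := (range n).biUnion generation

lemma mem_generation {n : ℕ} {x : Vertex b} : x ∈ generation n ↔ x.length = n := by
  simp only [generation, mem_image, mem_univ, true_and]
  constructor
  · rintro ⟨v, rfl⟩
    exact List.length_ofFn
  · rintro rfl
    exact ⟨x.get, List.ofFn_get x⟩

lemma mem_ball {n : ℕ} {x : Vertex b} : x ∈ ball n ↔ x.length < n := by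
  simp [ball, mem_generation]

lemma prod_ball {M : Type*} [CommMonoid M] (F : Vertex b → M) (n : ℕ) :
    ∏ x ∈ ball n, F x = ∏ m ∈ range n, ∏ v : Fin m → Fin b, F (List.ofFn v) := by
  rw [ball, prod_biUnion]
  · exact prod_congr rfl fun m _ => prod_image fun _ _ _ _ h => List.ofFn_injective h
  · intro m _ m' _ hm
    exact disjoint_left.2 fun x hx hx' =>
      hm ((mem_generation.1 hx).symm.trans (mem_generation.1 hx'))

noncomputable def bmc (init : ℕ) : Vertex b → (Vertex b → ℕ → Fin (b + 1)) → ℕ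
  | [] => fun _ => init
  | a :: x => fun ω => childCount (bmc init x ω) (ω x) a

lemma measurable_bmc (init : ℕ) (x : Vertex b) : Measurable (bmc init x) := by
  induction x with
  | nil => exact measurable_const
  | cons a x ih =>
    have : Measurable
        fun p : (Vertex b → ℕ → Fin (b + 1)) × ℕ => childCount p.2 (p.1 x) a :=
      measurable_from_prod_countable_left fun j0 =>
        (measurable_childCount j0 a).comp (measurable_pi_apply x)
    exact this.comp (measurable_id.prodMk ih)

lemma history_inter_eq {Ω : Type*} (ℓ : Vertex b → Ω → ℕ) (n : ℕ)
    (g f : Vertex b → ℕ) :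
    {ω | ∀ y : Vertex b, y.length ≤ n → ℓ y ω = g y} ∩
      {ω | ∀ x : Vertex b, x.length = n + 1 → ℓ x ω = f x} =
      {ω | ∀ y : Vertex b, y.length ≤ n + 1 →
        ℓ y ω = if y.length ≤ n then g y else f y} := by
  ext ω
  simp only [Set.mem_inter_iff, Set.mem_ofPred_eq]
  constructor
  · rintro ⟨hg, hf⟩ y hy
    split_ifs with hyn
    exacts [hg y hyn, hf y (by omega)]
  · intro h
    refine ⟨fun y hy => ?_, fun y hy => ?_⟩
    · simpa [hy] using h y (by omega)
    · simpa [hy] using h y (by omega)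

lemma measurableSet_bmc_history (init n : ℕ) (g : Vertex b → ℕ) :
    MeasurableSet {ω | ∀ y : Vertex b, y.length ≤ n → bmc init y ω = g y} := by
  simp only [Set.ofPred_forall]
  exact .iInter fun y => .iInter fun _ => measurable_bmc init y (measurableSet_singleton _)

lemma bmc_history_eq (init n : ℕ) {g : Vertex b → ℕ} (hg : g [] = init) :
    {ω | ∀ y : Vertex b, y.length ≤ n → bmc init y ω = g y} =
      Set.pi ((ball n : Finset (Vertex b)) : Set (Vertex b))
        fun x => {s | ∀ a, childCount (g x) s a = g (a :: x)} := by
  ext ω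
  simp only [Set.mem_ofPred_eq, Set.mem_pi, mem_coe, mem_ball]
  constructor
  · intro h x hx a
    rw [← h x hx.le, ← h (a :: x) (by simpa using hx)]
    rfl
  · intro h y
    induction y with
    | nil => exact fun _ => hg.symm
    | cons a x ih =>
      intro hx
      have hx' : x.length < n := by simpa using hx
      show childCount (bmc init x ω) (ω x) a = _
      rw [ih hx'.le, h x hx' a]

end Tree

section CookieBMC

variable {b : ℕ} [NeZero b] (C : Env)

lemma cookieMeasure_bmc_history (init n : ℕ) {g : Vertex b → ℕ} (hg : g [] = init) :
    cookieMeasure b C {ω | ∀ y : Vertex b, y.length ≤ n → bmc init y ω = g y} =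
      ∏ m ∈ range n, ∏ v : Fin m → Fin b,
        ENNReal.ofReal (childLaw b C (g (List.ofFn v)) fun a => g (a :: List.ofFn v)) := by
  have hmeas (x : Vertex b) : MeasurableSet {s | ∀ a, childCount (g x) s a = g (a :: x)} := by
    simp only [Set.ofPred_forall]
    exact .iInter fun a => measurable_childCount _ a (measurableSet_singleton _)
  rw [bmc_history_eq init n hg, cookieMeasure, Measure.infinitePi_pi _ fun x _ => hmeas x,
    prod_ball]
  simp only [cookieSeqMeasure_childCount_eq]

lemma cookieMeasure_bmc_history_succ (init n : ℕ) {g : Vertex b → ℕ} (hg : g [] = init)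
    (f : Vertex b → ℕ) :
    cookieMeasure b C ({ω | ∀ y : Vertex b, y.length ≤ n → bmc init y ω = g y} ∩
      {ω | ∀ x : Vertex b, x.length = n + 1 → bmc init x ω = f x}) =
      cookieMeasure b C {ω | ∀ y : Vertex b, y.length ≤ n → bmc init y ω = g y} *
        ∏ v : Fin n → Fin b,
          ENNReal.ofReal (childLaw b C (g (List.ofFn v)) fun a => f (a :: List.ofFn v)) := by
  rw [history_inter_eq, cookieMeasure_bmc_history C init (n + 1) (by simp [hg]),
    cookieMeasure_bmc_history C init n hg, prod_range_succ]
  congr 1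
  · refine prod_congr rfl fun m hm => prod_congr rfl fun v _ => ?_
    have := mem_range.1 hm
    simp [show m ≤ n by omega, show m + 1 ≤ n by omega]
  · simp

lemma isBMC_bmc (init : ℕ) : IsBMC b C (cookieMeasure b C) (bmc init) init := by
  refine ⟨fun x m => measurable_bmc init x (measurableSet_singleton m), by simp [bmc, root],
    fun n g f hA => ?_⟩
  have hg : g [] = init := by
    by_contra hg
    refine hA (measure_mono_null (fun ω hω => ?_) measure_empty)
    exact hg (hω [] (Nat.zero_le n)).symm
  rw [cond_apply (measurableSet_bmc_history init n g), cookieMeasure_bmc_history_succ C init n hg,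
    ENNReal.inv_mul_cancel_left hA (measure_ne_top _ _),
    ENNReal.ofReal_prod_of_nonneg fun v _ => childLaw_nonneg C _ _]

lemma ae_bmc_mono {i j : ℕ} (hij : i ≤ j) :
    ∀ᵐ ω ∂cookieMeasure b C, ∀ x : Vertex b, bmc i x ω ≤ bmc j x ω := by
  have hzeros :
      ∀ᵐ ω ∂cookieMeasure b C, ∀ x : Vertex b, ∃ᶠ k in atTop, (ω x k).1 = 0 :=
    ae_all_iff.2 fun x =>
      (measurePreserving_eval_infinitePi (fun _ => cookieSeqMeasure b C) x
        ).quasiMeasurePreserving.ae (ae_frequently_zero C)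
  filter_upwards [hzeros] with ω hω x
  induction x with
  | nil => exact hij
  | cons a x ih => exact childCount_mono (hω x) ih a

end CookieBMC

/-- **Proposition 3.6** (monotonicity of `L` with respect to the initial position).
For `i ≤ j`, the branching Markov chain under `P_i` is stochastically dominated by
the branching Markov chain under `P_j` : the two processes can be realized on a
common probability space so that `ℓ(x) ≤ ℓ̃(x)` for every vertex `x`, a.s. -/
theorem bmc_monotone_initial_position
    (b : ℕ) (hb : 2 ≤ b) (C : Env) (i j : ℕ) (hij : i ≤ j) :
    ∃ (Ω : Type) (_ : MeasurableSpace Ω) (P : Measure Ω)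
      (_ : IsProbabilityMeasure P) (ℓ ℓ' : Vertex b → Ω → ℕ),
      IsBMC b C P ℓ i ∧ IsBMC b C P ℓ' j ∧
        P {ω | ∀ x : Vertex b, ℓ x ω ≤ ℓ' x ω} = 1 := by
  have : NeZero b := ⟨by omega⟩
  refine ⟨_, inferInstance, cookieMeasure b C, inferInstance, bmc i, bmc j,
    isBMC_bmc C i, isBMC_bmc C j, ?_⟩
  exact (measure_congr (ae_eq_univ.2 (ae_iff.1 (ae_bmc_mono C hij)))).trans measure_univ

end CookieRW
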